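/- arXiv:1707.06268 — 3 statements merged into one kernel-verified Lean document; each statement's English description precedes it below -/
import Mathlib

section
/- Define, for each g ≥ 1, a sequence h_r^g (0 ≤ r ≤ 6g−3, and h_r^g = 0 for r outside this range) by: h_r^1 = 1 for r = 0,1,2,3; and for g ≥ 1, h_r^{g+1} = h_{r-2}^g + 2 h_{r-3}^g + h_{r-4}^g + m_r^g − m_{r-4}^g for r ≤ 3g−1, h_r^{g+1} = 4 h_{3g}^g + m_{3g}^g − m_{3g-3}^g for 3g ≤ r ≤ 3g+3, and h_r^{g+1} = h_{r-2}^g + 2 h_{r-3}^g + h_{r-4}^g + m_{r-3}^g − m_{r+1}^g for 3g+4 ≤ r ≤ 6g+3, where m_r^g is the coefficient of t^r in (1+t^3)^{2g} (and m_r^g = 0 for r < 0). Then for all g ≥ 1 and all 0 ≤ r ≤ 6g−3, h_r^g = h_{6g-3-r}^g. -/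
noncomputable def mcoef (g : ℕ) (r : ℤ) : ℤ :=
  if 0 ≤ r then ((1 + Polynomial.X ^ 3 : Polynomial ℤ) ^ (2 * g)).coeff r.toNat else 0

open Polynomial in
lemma mcoef_eq (g : ℕ) (r : ℤ) :
    mcoef g r = if 3 ∣ r ∧ 0 ≤ r ∧ r ≤ 6 * g then ((2*g).choose (r.toNat / 3) : ℤ) else 0 := by
  have key : (1 + X ^ 3 : ℤ[X]) ^ (2 * g) = expand ℤ 3 ((1 + X) ^ (2 * g)) := by
    simp [map_pow]
  unfold mcoef
  rw [key]
  by_cases hr : 0 ≤ r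
  · rw [if_pos hr, Polynomial.coeff_expand (by norm_num)]
    by_cases h3 : 3 ∣ r.toNat
    · rw [if_pos h3, coeff_one_add_X_pow]
      by_cases hle : r ≤ 6 * g
      · rw [if_pos ⟨by omega, hr, hle⟩]
      · rw [if_neg (by tauto)]
        have : 2 * g < r.toNat / 3 := by omega
        rw [Nat.choose_eq_zero_of_lt this]; simp
    · rw [if_neg h3, if_neg (by omega)]
  · rw [if_neg hr, if_neg (by omega)]

lemma mcoef_symm (g : ℕ) (r : ℤ) : mcoef g r = mcoef g (6 * g - r) := by
  rw [mcoef_eq, mcoef_eq]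
  by_cases hc : 3 ∣ r ∧ 0 ≤ r ∧ r ≤ 6 * g
  · rw [if_pos hc, if_pos ⟨by omega, by omega, by omega⟩]
    congr 1
    have h1 : (6 * (g:ℤ) - r).toNat / 3 = 2 * g - r.toNat / 3 := by omega
    rw [h1, Nat.choose_symm (by omega)]
  · rw [if_neg hc, if_neg (by omega)]

theorem h_poincare_duality
    (h : ℕ → ℤ → ℤ)
    (h1 : ∀ r : ℤ, 0 ≤ r → r ≤ 3 → h 1 r = 1)
    (h0 : ∀ g : ℕ, 1 ≤ g → ∀ r : ℤ, (r < 0 ∨ 6 * (g : ℤ) - 3 < r) → h g r = 0)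
    (hrec1 : ∀ g : ℕ, 1 ≤ g → ∀ r : ℤ, 0 ≤ r → r ≤ 3 * (g : ℤ) - 1 →
      h (g + 1) r = h g (r - 2) + 2 * h g (r - 3) + h g (r - 4) + mcoef g r - mcoef g (r - 4))
    (hrec2 : ∀ g : ℕ, 1 ≤ g → ∀ r : ℤ, 3 * (g : ℤ) ≤ r → r ≤ 3 * (g : ℤ) + 3 →
      h (g + 1) r = 4 * h g (3 * (g : ℤ)) + mcoef g (3 * (g : ℤ)) - mcoef g (3 * (g : ℤ) - 3))
    (hrec3 : ∀ g : ℕ, 1 ≤ g → ∀ r : ℤ, 3 * (g : ℤ) + 4 ≤ r → r ≤ 6 * (g : ℤ) + 3 →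
      h (g + 1) r = h g (r - 2) + 2 * h g (r - 3) + h g (r - 4) + mcoef g (r - 3) - mcoef g (r + 1)) :
    ∀ g : ℕ, 1 ≤ g → ∀ r : ℤ, 0 ≤ r → r ≤ 6 * (g : ℤ) - 3 →
      h g r = h g (6 * (g : ℤ) - 3 - r) := by
  -- strengthen: symmetry for ALL integers r
  suffices key : ∀ g : ℕ, 1 ≤ g → ∀ r : ℤ, h g r = h g (6 * (g : ℤ) - 3 - r) by
    intro g hg r _ _; exact key g hg r
  intro g hg
  induction g with
  | zero => omega
  | succ g ih =>
    rcases Nat.eq_or_lt_of_le hg with hg1 | hg1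
    · -- base case g+1 = 1
      intro r
      have e1 : g = 0 := by omega
      subst e1
      by_cases hr0 : 0 ≤ r
      · by_cases hr3 : r ≤ 3
        · rw [h1 r hr0 hr3, h1 (6 * ((1:ℕ):ℤ) - 3 - r) (by push_cast; omega) (by push_cast; omega)]
        · rw [h0 1 le_rfl r (by push_cast; omega), h0 1 le_rfl _ (by push_cast; omega)]
      · rw [h0 1 le_rfl r (by push_cast; omega), h0 1 le_rfl _ (by push_cast; omega)]
    · have hg' : 1 ≤ g := by omega
      have S := ih hg'
      -- main claim for r in lower half (covers r < 0 too)
      have low : ∀ r : ℤ, r ≤ 3 * (g : ℤ) - 1 →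
          h (g + 1) r = h (g + 1) (6 * ((g : ℤ) + 1) - 3 - r) := by
        intro r hr
        by_cases hr0 : 0 ≤ r
        · rw [hrec1 g hg' r hr0 hr,
            hrec3 g hg' (6 * ((g : ℤ) + 1) - 3 - r) (by omega) (by omega)]
          rw [S (r - 2), S (r - 3), S (r - 4), mcoef_symm g r, mcoef_symm g (r - 4)]
          have e1 : 6 * (g:ℤ) - 3 - (r - 2) = 6 * ((g:ℤ) + 1) - 3 - r - 4 := by ring
          have e2 : 6 * (g:ℤ) - 3 - (r - 3) = 6 * ((g:ℤ) + 1) - 3 - r - 3 := by ring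
          have e3 : 6 * (g:ℤ) - 3 - (r - 4) = 6 * ((g:ℤ) + 1) - 3 - r - 2 := by ring
          have e4 : 6 * (g:ℤ) - r = 6 * ((g:ℤ) + 1) - 3 - r - 3 := by ring
          have e5 : 6 * (g:ℤ) - (r - 4) = 6 * ((g:ℤ) + 1) - 3 - r + 1 := by ring
          rw [e1, e2, e3, e4, e5]; ring
        · rw [h0 (g+1) (by omega) r (by push_cast; omega),
            h0 (g+1) (by omega) _ (by push_cast; omega)]
      intro r
      have ec : (((g+1):ℕ):ℤ) = (g:ℤ)+1 := by push_cast; ring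
      rw [ec]
      by_cases hcase : r ≤ 3 * (g : ℤ) - 1
      · exact low r hcase
      by_cases hmid : r ≤ 3 * (g : ℤ) + 3
      · rw [hrec2 g hg' r (by omega) hmid,
          hrec2 g hg' (6 * ((g : ℤ) + 1) - 3 - r) (by omega) (by omega)]
      · -- upper: apply `low` to the mirror point
        have := low (6 * ((g : ℤ) + 1) - 3 - r) (by omega)
        have e : 6 * ((g : ℤ) + 1) - 3 - (6 * ((g : ℤ) + 1) - 3 - r) = r := by ring
        rw [e] at this
        exact this.symm
end

section
/- With h_r^g defined by the recursion: h_r^1 = 1 for r = 0,1,2,3; h_r^{g+1} = h_{r-2}^g + 2h_{r-3}^g + h_{r-4}^g + m_r^g − m_{r-4}^g for r ≤ 3g−1; h_r^{g+1} = 4h_{3g}^g + m_{3g}^g − m_{3g-3}^g for 3g ≤ r ≤ 3g+3; h_r^{g+1} = h_{r-2}^g + 2h_{r-3}^g + h_{r-4}^g + m_{r-3}^g − m_{r+1}^g for 3g+4 ≤ r ≤ 6g+3 (where m_r^g is the coefficient of t^r in (1+t^3)^{2g}, zero for r < 0), we have for every g ≥ 1: h_{3g}^g = 2^{2g-1} −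 C(2g−1, g). -/
lemma coeff_one_add_X_pow_three (n k : ℕ) :
    ((1 + Polynomial.X ^ 3 : Polynomial ℤ) ^ n).coeff (3 * k) = (n.choose k : ℤ) := by
  rw [add_comm, add_pow]
  rw [Polynomial.finset_sum_coeff]
  simp only [one_pow, mul_one, ← pow_mul, Polynomial.coeff_natCast_mul, Polynomial.coeff_X_pow]
  by_cases hk : k ≤ n
  · rw [Finset.sum_eq_single k]
    · simp
    · intro b hb hbk
      have : ¬ (b * 3 = 3 * k) := by omega
      simp [this]
      intro h; exact absurd h (by omega)
    · intro hnot
      exact absurd (Finset.mem_range.mpr (by omega)) hnot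
  · rw [Nat.choose_eq_zero_of_lt (by omega)]
    push_cast
    apply Finset.sum_eq_zero
    intro b hb
    have hb' := Finset.mem_range.mp hb
    have : ¬ (b * 3 = 3 * k) := by omega
    simp [this]
    intro h; exact absurd h (by omega)

lemma mcoef_three_mul (g k : ℕ) : mcoef g (3 * (k : ℤ)) = ((2 * g).choose k : ℤ) := by
  unfold mcoef
  rw [if_pos (by positivity)]
  have : ((3 * (k : ℤ)).toNat) = 3 * k := by omega
  rw [this, coeff_one_add_X_pow_three]

theorem h_middle_value
    (h : ℕ → ℤ → ℤ)
    (h1 : ∀ r : ℤ, 0 ≤ r → r ≤ 3 → h 1 r = 1)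
    (h0 : ∀ g : ℕ, 1 ≤ g → ∀ r : ℤ, (r < 0 ∨ 6 * (g : ℤ) - 3 < r) → h g r = 0)
    (hrec1 : ∀ g : ℕ, 1 ≤ g → ∀ r : ℤ, 0 ≤ r → r ≤ 3 * (g : ℤ) - 1 →
      h (g + 1) r = h g (r - 2) + 2 * h g (r - 3) + h g (r - 4) + mcoef g r - mcoef g (r - 4))
    (hrec2 : ∀ g : ℕ, 1 ≤ g → ∀ r : ℤ, 3 * (g : ℤ) ≤ r → r ≤ 3 * (g : ℤ) + 3 →
      h (g + 1) r = 4 * h g (3 * (g : ℤ)) + mcoef g (3 * (g : ℤ)) - mcoef g (3 * (g : ℤ) - 3))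
    (hrec3 : ∀ g : ℕ, 1 ≤ g → ∀ r : ℤ, 3 * (g : ℤ) + 4 ≤ r → r ≤ 6 * (g : ℤ) + 3 →
      h (g + 1) r = h g (r - 2) + 2 * h g (r - 3) + h g (r - 4) + mcoef g (r - 3) - mcoef g (r + 1)) :
    ∀ g : ℕ, 1 ≤ g →
      h g (3 * (g : ℤ)) = 2 ^ (2 * g - 1) - (Nat.choose (2 * g - 1) g : ℤ) := by
  intro g hg
  induction g, hg using Nat.le_induction with
  | base =>
    have : (3 : ℤ) * ((1 : ℕ) : ℤ) = 3 := by norm_num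
    rw [this, h1 3 (by norm_num) (by norm_num)]
    norm_num
  | succ g hg IH =>
    obtain ⟨m, rfl⟩ : ∃ m, g = m + 1 := ⟨g - 1, by omega⟩
    set n := m + 1 with hn
    have key := hrec2 n hg (3 * ((n : ℤ) + 1)) (by push_cast; omega) (by push_cast; omega)
    have e1 : (3 : ℤ) * ((n : ℤ) + 1) = 3 * (((n + 1 : ℕ) : ℤ)) := by push_cast; ring
    rw [e1] at key
    rw [key, IH]
    -- compute the two binomial coefficients
    have m1 : mcoef n (3 * (n : ℤ)) = ((2 * n).choose n : ℤ) := mcoef_three_mul n n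
    have m2 : mcoef n (3 * (n : ℤ) - 3) = ((2 * n).choose m : ℤ) := by
      have : 3 * (n : ℤ) - 3 = 3 * (m : ℤ) := by push_cast [hn]; ring
      rw [this, mcoef_three_mul]
    rw [m1, m2]
    -- now pure arithmetic with n = m + 1
    have hexp : 2 * (n + 1) - 1 = 2 * m + 3 := by omega
    have hexp2 : 2 * n - 1 = 2 * m + 1 := by omega
    have hcn : 2 * n = 2 * m + 2 := by omega
    rw [hexp, hexp2, hcn, hn]
    -- binomial identities in ℕ
    have b1 : (2 * m + 2).choose (m + 1) = 2 * ((2 * m + 1).choose (m + 1)) := by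
      have := Nat.choose_succ_succ' (2 * m + 1) m
      have hs : (2 * m + 1).choose m = (2 * m + 1).choose (m + 1) := by
        have := Nat.choose_symm (n := 2 * m + 1) (k := m + 1) (by omega)
        simpa [show 2 * m + 1 - (m + 1) = m from by omega] using this
      rw [Nat.choose_succ_succ' (2 * m + 1) m, hs]; ring
    have b2 : (2 * m + 3).choose (m + 2) =
        (2 * m + 2).choose (m + 1) + (2 * m + 2).choose (m + 2) := by
      exact Nat.choose_succ_succ' (2 * m + 2) (m + 1)
    have b3 : (2 * m + 2).choose (m + 2) = (2 * m + 2).choose m := by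
      have := Nat.choose_symm (n := 2 * m + 2) (k := m + 2) (by omega)
      simpa [show 2 * m + 2 - (m + 2) = m from by omega] using this.symm
    have hpow : (2 : ℤ) ^ (2 * m + 3) = 4 * 2 ^ (2 * m + 1) := by ring
    push_cast [b2, b3, b1, hpow]
    ring
end

section
/- Define rational Betti numbers b_r^g by: b_r^1 = 1 for r ∈ {0,3}, b_r^1 = 0 for r ∈ {1,2}; for g ≥ 1 and r ≤ 3g+1, b_r^{g+1} = b_{r-2}^g + 2b_{r-3}^g + b_{r-4}^g + m_r^g − m_{r-4}^g (with m_r^g the coefficient of t^r in (1+t^3)^{2g}, zero for r < 0), and for 3g+2 ≤ r ≤ 6g+3, b_r^{g+1} = b_{6g+3-r}^{g+1}. Then for every g ≥ 1, ∑_{r=0}^{6g-3} b_r^g = g · C(2g, g). -/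
lemma mcoef_nat (g k : ℕ) :
    mcoef g k = if 3 ∣ k then ((2*g).choose (k/3) : ℤ) else 0 := by
  have h1 : (1 + Polynomial.X ^ 3 : Polynomial ℤ) = Polynomial.expand ℤ 3 (1 + Polynomial.X) := by
    simp [map_add, Polynomial.expand_X]
  rw [mcoef, if_pos (by positivity), Int.toNat_natCast, h1, ← map_pow,
    Polynomial.coeff_expand (by norm_num : 0 < 3)]
  split_ifs with h
  · rw [Polynomial.coeff_one_add_X_pow]
  · rfl

lemma mcoef_neg (g : ℕ) (r : ℤ) (h : r < 0) : mcoef g r = 0 := if_neg (by omega)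

lemma shift_sum (f : ℤ → ℤ) (hf : ∀ r : ℤ, r < 0 → f r = 0) (c n : ℕ) (h : c ≤ n) :
    ∑ r ∈ Finset.range n, f ((r : ℤ) - c) = ∑ r ∈ Finset.range (n - c), f r := by
  obtain ⟨m, rfl⟩ : ∃ m, n = c + m := ⟨n - c, by omega⟩
  rw [Nat.add_sub_cancel_left, Finset.sum_range_add]
  have h1 : ∑ r ∈ Finset.range c, f ((r:ℤ) - c) = 0 :=
    Finset.sum_eq_zero fun r hr => hf _ (by simp only [Finset.mem_range] at hr; omega)
  rw [h1, zero_add]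
  exact Finset.sum_congr rfl fun j _ => by push_cast; ring_nf

lemma choose_step (g : ℕ) :
    (g + 1) * Nat.choose (2 * (g+1)) (g+1) = (4*g + 2) * Nat.choose (2*g) g := by
  have hA := Nat.add_one_mul_choose_eq (2*g) g
  have hB := Nat.add_one_mul_choose_eq (2*g+1) g
  have hs : (2*g+1).choose g = (2*g+1).choose (g+1) := by
    rw [← Nat.choose_symm (by omega : g + 1 ≤ 2*g+1)]
    congr 1; omega
  rw [hs] at hB
  apply Nat.eq_of_mul_eq_mul_left (show 0 < g + 1 by omega)
  have h2 : 2 * (g+1) = 2*g+1+1 := by ring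
  rw [h2]
  zify at hA hB ⊢
  linear_combination (-((g:ℤ)+1))*hB - (2*(g:ℤ)+2)*hA

theorem b_total_sum
    (b : ℕ → ℤ → ℤ)
    (b1 : b 1 0 = 1 ∧ b 1 3 = 1 ∧ b 1 1 = 0 ∧ b 1 2 = 0)
    (b0 : ∀ g : ℕ, 1 ≤ g → ∀ r : ℤ, (r < 0 ∨ 6 * (g : ℤ) - 3 < r) → b g r = 0)
    (brec : ∀ g : ℕ, 1 ≤ g → ∀ r : ℤ, 0 ≤ r → r ≤ 3 * (g : ℤ) + 1 →
      b (g + 1) r = b g (r - 2) + 2 * b g (r - 3) + b g (r - 4) + mcoef g r - mcoef g (r - 4))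
    (bsym : ∀ g : ℕ, 1 ≤ g → ∀ r : ℤ, 3 * (g : ℤ) + 2 ≤ r → r ≤ 6 * (g : ℤ) + 3 →
      b (g + 1) r = b (g + 1) (6 * (g : ℤ) + 3 - r)) :
    ∀ g : ℕ, 1 ≤ g →
      ∑ r ∈ Finset.range (6 * g - 2), b g (r : ℤ) = g * Nat.choose (2 * g) g := by
  have hsym : ∀ g : ℕ, 1 ≤ g → ∀ r : ℤ, b g r = b g (6 * (g:ℤ) - 3 - r) := by
    intro g hg r
    obtain ⟨g', rfl⟩ : ∃ g', g = g' + 1 := ⟨g - 1, by omega⟩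
    rcases Nat.eq_zero_or_pos g' with h0 | h1
    · subst h0
      by_cases hr0 : 0 ≤ r
      · by_cases hr3 : r ≤ 3
        · obtain ⟨hb0, hb3, hb1v, hb2⟩ := b1
          interval_cases r <;> norm_num <;> simp_all
        · rw [b0 1 le_rfl r (by push_cast; omega), b0 1 le_rfl _ (by push_cast; omega)]
      · rw [b0 1 le_rfl r (by omega), b0 1 le_rfl _ (by push_cast; omega)]
    · by_cases hr0 : 0 ≤ r
      · by_cases hrt : r ≤ 6 * (g':ℤ) + 3
        · by_cases hrm : 3 * (g':ℤ) + 2 ≤ r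
          · have := bsym g' h1 r hrm hrt
            rw [this]; congr 1; push_cast; ring
          · have hb : 3 * (g':ℤ) + 2 ≤ 6 * (g':ℤ) + 3 - r := by omega
            have := bsym g' h1 (6 * (g':ℤ) + 3 - r) hb (by omega)
            have h2 : 6 * (g':ℤ) + 3 - (6 * (g':ℤ) + 3 - r) = r := by ring
            rw [h2] at this
            rw [← this]; congr 1; push_cast; ring
        · rw [b0 (g'+1) (by omega) r (by push_cast; omega),
              b0 (g'+1) (by omega) _ (by push_cast; omega)]
      · rw [b0 (g'+1) (by omega) r (by omega),
            b0 (g'+1) (by omega) _ (by push_cast; omega)]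
  have hrefl : ∀ g : ℕ, 1 ≤ g → ∀ k : ℕ, k ≤ 6*g-2 →
      (∑ r ∈ Finset.range k, b g (r:ℤ)) + (∑ r ∈ Finset.range (6*g-2-k), b g (r:ℤ))
        = ∑ r ∈ Finset.range (6*g-2), b g (r:ℤ) := by
    intro g hg k hk
    obtain ⟨m, hm⟩ : ∃ m, 6*g-2 = k + m := ⟨6*g-2-k, by omega⟩
    rw [hm, Nat.add_sub_cancel_left, Finset.sum_range_add]
    congr 1
    have step : ∀ j ∈ Finset.range m, b g ((k + j : ℕ) : ℤ) = b g ((m - 1 - j : ℕ) : ℤ) := by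
      intro j hj
      simp only [Finset.mem_range] at hj
      rw [hsym g hg ((k + j : ℕ) : ℤ)]
      congr 1
      have : (6:ℤ) * g - 2 = (k:ℤ) + m := by omega
      omega
    rw [Finset.sum_congr rfl step, Finset.sum_range_reflect (fun j => b g (j:ℤ)) m]
  have hstep : ∀ g : ℕ, 1 ≤ g →
      ∑ r ∈ Finset.range (6*(g+1)-2), b (g+1) (r:ℤ)
        = 4 * (∑ r ∈ Finset.range (6*g-2), b g (r:ℤ)) + 2 * ((2*g).choose g : ℤ) := by
    intro g hg
    have hneg : ∀ r : ℤ, r < 0 → b g r = 0 := fun r hr => b0 g hg r (Or.inl hr)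
    have hmneg : ∀ r : ℤ, r < 0 → mcoef g r = 0 := fun r hr => mcoef_neg g r hr
    -- S(g+1) = 2 * first-half sum
    have hhalf : ∑ r ∈ Finset.range (6*(g+1)-2), b (g+1) (r:ℤ)
        = 2 * ∑ r ∈ Finset.range (3*g+2), b (g+1) (r:ℤ) := by
      have h := hrefl (g+1) (by omega) (3*g+2) (by omega)
      have e : 6*(g+1)-2-(3*g+2) = 3*g+2 := by omega
      rw [e] at h
      rw [← h]; ring
    -- recursion expansion
    have hexp : ∑ r ∈ Finset.range (3*g+2), b (g+1) (r:ℤ)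
        = (∑ r ∈ Finset.range (3*g+2), b g ((r:ℤ) - 2))
          + 2 * (∑ r ∈ Finset.range (3*g+2), b g ((r:ℤ) - 3))
          + (∑ r ∈ Finset.range (3*g+2), b g ((r:ℤ) - 4))
          + (∑ r ∈ Finset.range (3*g+2), mcoef g (r:ℤ))
          - (∑ r ∈ Finset.range (3*g+2), mcoef g ((r:ℤ) - 4)) := by
      have e1 : ∀ r ∈ Finset.range (3*g+2), b (g+1) (r:ℤ)
          = b g ((r:ℤ) - 2) + 2 * b g ((r:ℤ) - 3) + b g ((r:ℤ) - 4)
            + mcoef g (r:ℤ) - mcoef g ((r:ℤ) - 4) := by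
        intro r hr
        simp only [Finset.mem_range] at hr
        exact brec g hg (r:ℤ) (Int.natCast_nonneg r) (by omega)
      rw [Finset.sum_congr rfl e1]
      rw [Finset.sum_sub_distrib, Finset.sum_add_distrib, Finset.sum_add_distrib,
        Finset.sum_add_distrib, ← Finset.mul_sum]
    have hs2 : ∑ r ∈ Finset.range (3*g+2), b g ((r:ℤ) - 2)
        = ∑ r ∈ Finset.range (3*g), b g (r:ℤ) := by
      have h := shift_sum (b g) hneg 2 (3*g+2) (by omega)
      have e : 3*g+2-2 = 3*g := by omega
      rw [e] at h; simpa using h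
    have hs3 : ∑ r ∈ Finset.range (3*g+2), b g ((r:ℤ) - 3)
        = ∑ r ∈ Finset.range (3*g-1), b g (r:ℤ) := by
      have h := shift_sum (b g) hneg 3 (3*g+2) (by omega)
      have e : 3*g+2-3 = 3*g-1 := by omega
      rw [e] at h; simpa using h
    have hs4 : ∑ r ∈ Finset.range (3*g+2), b g ((r:ℤ) - 4)
        = ∑ r ∈ Finset.range (3*g-2), b g (r:ℤ) := by
      have h := shift_sum (b g) hneg 4 (3*g+2) (by omega)
      have e : 3*g+2-4 = 3*g-2 := by omega
      rw [e] at h; simpa using h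
    have hm4 : ∑ r ∈ Finset.range (3*g+2), mcoef g ((r:ℤ) - 4)
        = ∑ r ∈ Finset.range (3*g-2), mcoef g (r:ℤ) := by
      have h := shift_sum (mcoef g) hmneg 4 (3*g+2) (by omega)
      have e : 3*g+2-4 = 3*g-2 := by omega
      rw [e] at h; simpa using h
    -- the m-sum difference
    have m0 : mcoef g ((3*g-2+0 : ℕ) : ℤ) = 0 := by
      rw [mcoef_nat, if_neg (by omega)]
    have m1 : mcoef g ((3*g-2+1 : ℕ) : ℤ) = 0 := by
      rw [mcoef_nat, if_neg (by omega)]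
    have m2 : mcoef g ((3*g-2+2 : ℕ) : ℤ) = ((2*g).choose g : ℤ) := by
      rw [mcoef_nat, if_pos (by omega)]
      have e : (3*g-2+2)/3 = g := by omega
      rw [e]
    have m3 : mcoef g ((3*g-2+3 : ℕ) : ℤ) = 0 := by
      rw [mcoef_nat, if_neg (by omega)]
    have hM : (∑ r ∈ Finset.range (3*g+2), mcoef g (r:ℤ))
        - (∑ r ∈ Finset.range (3*g-2), mcoef g (r:ℤ)) = ((2*g).choose g : ℤ) := by
      have e : 3*g+2 = (3*g-2) + 4 := by omega
      rw [e, Finset.sum_range_add, add_sub_cancel_left]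
      rw [show (4:ℕ) = 3+1 from rfl, Finset.sum_range_succ,
        show (3:ℕ) = 2+1 from rfl, Finset.sum_range_succ,
        show (2:ℕ) = 1+1 from rfl, Finset.sum_range_succ,
        Finset.sum_range_one]
      rw [m0, m1, m2, m3]; ring
    -- the paired halves
    have hp1 : (∑ r ∈ Finset.range (3*g), b g (r:ℤ)) + (∑ r ∈ Finset.range (3*g-2), b g (r:ℤ))
        = ∑ r ∈ Finset.range (6*g-2), b g (r:ℤ) := by
      have h := hrefl g hg (3*g) (by omega)
      have e : 6*g-2-3*g = 3*g-2 := by omega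
      rwa [e] at h
    have hp2 : (∑ r ∈ Finset.range (3*g-1), b g (r:ℤ)) + (∑ r ∈ Finset.range (3*g-1), b g (r:ℤ))
        = ∑ r ∈ Finset.range (6*g-2), b g (r:ℤ) := by
      have h := hrefl g hg (3*g-1) (by omega)
      have e : 6*g-2-(3*g-1) = 3*g-1 := by omega
      rwa [e] at h
    rw [hhalf, hexp, hs2, hs3, hs4, hm4]
    linarith [hp1, hp2, hM]
  intro g hg
  induction g, hg using Nat.le_induction with
  | base =>
    obtain ⟨hb0, hb3, hb1v, hb2⟩ := b1
    norm_num [Finset.sum_range_succ, hb0, hb3, hb1v, hb2]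
  | succ g hg ih =>
    rw [hstep g hg, ih]
    have h := choose_step g
    zify at h
    push_cast
    linarith [h]
end
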